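/- There exists a constant C > 0 such that for every continuously differentiable function v : [0,1] → ℝ with v(0) = v(1) = 0 one has ‖v‖_{L²} ≤ C ‖v′‖_{(H¹)′}, i.e. the L² norm of v is controlled by the dual H¹ norm of its derivative. -/

import Mathlib

open Set

noncomputable section

/-- Elementwise (right-sided) derivative: on each half-open element the spline agrees with a
polynomial, and `ederiv` computes the derivative of that polynomial piece. -/
def ederiv (v : ℝ → ℝ) : ℝ → ℝ := fun x => derivWithin v (Set.Ici x) x

/-- The `j`-th element of the partition of `ℝ` induced by the breakpoints
`ζ 0 < ζ 1 < ⋯ < ζ (k-1)` (the first and last elements are extended to all of `ℝ`). -/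
def piece (k : ℕ) (ζ : ℕ → ℝ) (j : ℕ) : Set ℝ :=
  if j = 0 then Iio (ζ 1)
  else if j = k - 2 then Ici (ζ (k - 2))
  else Ico (ζ j) (ζ (j + 1))

/-- `v` is a spline of degree `q` over the breakpoint vector `ζ 0 < ⋯ < ζ (k-1)`:
on each element it coincides with a polynomial of degree at most `q`, and for `q ≥ 1`
it is globally of class `C^{q-1}`. -/
def IsSpline (q k : ℕ) (ζ : ℕ → ℝ) (v : ℝ → ℝ) : Prop :=
  (∀ j ≤ k - 2, ∃ P : Polynomial ℝ, P.natDegree ≤ q ∧ ∀ x ∈ piece k ζ j, v x = P.eval x) ∧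
  (1 ≤ q → ContDiff ℝ (q - 1 : ℕ) v)

/-- The merged breakpoint vector `Z_M = (ζ 0, ζ 2, ζ 3, …, ζ (k-3), ζ (k-1))`, obtained by
removing the second and the second-to-last breakpoints; it has `k - 2` entries. -/
def merged (k : ℕ) (ζ : ℕ → ℝ) : ℕ → ℝ :=
  fun j => if j = 0 then ζ 0 else if j = k - 3 then ζ (k - 1) else ζ (j + 1)

/-- `ζ 0 = 0 < ζ 1 < ⋯ < ζ (k-1) = 1` is a breakpoint vector for `[0,1]`. -/
def IsBreakpoints (k : ℕ) (ζ : ℕ → ℝ) : Prop :=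
  (∀ j, j + 1 < k → ζ j < ζ (j + 1)) ∧ ζ 0 = 0 ∧ ζ (k - 1) = 1

/-- `α`-quasi-uniformity: every gap is at least `α` times the largest gap. -/
def QuasiUniform (α : ℝ) (k : ℕ) (ζ : ℕ → ℝ) : Prop :=
  ∀ i j, i + 1 < k → j + 1 < k → α * (ζ (i + 1) - ζ i) ≤ ζ (j + 1) - ζ j

/-- `L²(0,1)` norm. -/
def L2norm (f : ℝ → ℝ) : ℝ := Real.sqrt (∫ x in (0:ℝ)..1, f x ^ 2)

/-- Broken `H¹(0,1)` norm, with the elementwise derivative. -/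
def H1norm (f : ℝ → ℝ) : ℝ :=
  Real.sqrt ((∫ x in (0:ℝ)..1, f x ^ 2) + ∫ x in (0:ℝ)..1, ederiv f x ^ 2)

/-- Dual `(H¹)'` norm of `φ ∈ L²(0,1)`. -/
def dualH1norm (φ : ℝ → ℝ) : ℝ :=
  sSup {r : ℝ | ∃ w : ℝ → ℝ, ContDiff ℝ 1 w ∧
    (∫ x in (0:ℝ)..1, (w x ^ 2 + deriv w x ^ 2)) ≤ 1 ∧ r = ∫ x in (0:ℝ)..1, φ x * w x}

/-- `S^p_{0,∂}`: degree-`p` splines on `Z` vanishing together with their first derivative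
at both endpoints. -/
def S0d (p k : ℕ) (ζ : ℕ → ℝ) : Set (ℝ → ℝ) :=
  {v | IsSpline p k ζ v ∧ v 0 = 0 ∧ v 1 = 0 ∧ ederiv v 0 = 0 ∧ ederiv v 1 = 0}

/-- `S^{p-1}_0`: degree-`(p-1)` splines on `Z` vanishing at both endpoints. -/
def S0 (p k : ℕ) (ζ : ℕ → ℝ) : Set (ℝ → ℝ) :=
  {v | IsSpline (p - 1) k ζ v ∧ v 0 = 0 ∧ v 1 = 0}

/-- `S^{p-1}_{0,∫}`: degree-`(p-1)` splines on `Z` vanishing at both endpoints and with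
zero mean. -/
def S0i (p k : ℕ) (ζ : ℕ → ℝ) : Set (ℝ → ℝ) :=
  {v | IsSpline (p - 1) k ζ v ∧ v 0 = 0 ∧ v 1 = 0 ∧ (∫ x in (0:ℝ)..1, v x) = 0}

/-- `S^{p-1}_M`: degree-`(p-1)` splines on the merged breakpoint vector `Z_M`. -/
def SM (p k : ℕ) (ζ : ℕ → ℝ) : Set (ℝ → ℝ) :=
  {v | IsSpline (p - 1) (k - 2) (merged k ζ) v}

/-- `S^{p-1}_{M,∫}`: degree-`(p-1)` splines on `Z_M` with zero mean. -/
def SMi (p k : ℕ) (ζ : ℕ → ℝ) : Set (ℝ → ℝ) :=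
  {v | IsSpline (p - 1) (k - 2) (merged k ζ) v ∧ (∫ x in (0:ℝ)..1, v x) = 0}

/-- `S^{p-2}_M`: degree-`(p-2)` splines on the merged breakpoint vector `Z_M`. -/
def SM2 (p k : ℕ) (ζ : ℕ → ℝ) : Set (ℝ → ℝ) :=
  {v | IsSpline (p - 2) (k - 2) (merged k ζ) v}


/-! Test the dual norm against `w x = -∫ t in 0..x, v t`. Since `v 0 = v 1 = 0`, integrating by
parts gives `∫ v' w = ‖v‖²`. On the other hand `w' = -v`, and Cauchy–Schwarz gives
`|w| ≤ ‖v‖` pointwise, so `‖w‖²_{H¹} ≤ 2 ‖v‖²`. Hence `‖v‖² ≤ √2 ‖v‖ ‖v'‖_{(H¹)'}`, so one can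
take `C = √2`. -/

open MeasureTheory

theorem integral_mul_le_sqrt_mul_sqrt {α : Type*} [MeasurableSpace α] {μ : Measure α}
    {f g : α → ℝ} (hf : MemLp f 2 μ) (hg : MemLp g 2 μ) :
    ∫ a, f a * g a ∂μ ≤ √(∫ a, f a ^ 2 ∂μ) * √(∫ a, g a ^ 2 ∂μ) := by
  have holder := integral_mul_norm_le_Lp_mul_Lq (μ := μ) Real.HolderConjugate.two_two
    (by simpa using hf) (by simpa using hg)
  simp only [Real.norm_eq_abs, Real.rpow_two, sq_abs, ← Real.sqrt_eq_rpow] at holder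
  calc ∫ a, f a * g a ∂μ ≤ ∫ a, |f a| * |g a| ∂μ := by
        simpa only [Real.norm_eq_abs, abs_mul] using
          (le_abs_self _).trans (norm_integral_le_integral_norm (fun a => f a * g a))
    _ ≤ _ := holder

theorem Continuous.contDiff_one_primitive {v : ℝ → ℝ} (hv : Continuous v) (a : ℝ) :
    ContDiff ℝ 1 (fun x => ∫ t in a..x, v t) :=
  contDiff_one_iff_deriv.2
    ⟨fun x => (hv.integral_hasStrictDerivAt a x).hasDerivAt.differentiableAt, by
      rwa [show deriv (fun x => ∫ t in a..x, v t) = v from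
        funext (Continuous.deriv_integral v hv a)]⟩

namespace intervalIntegral

variable {v : ℝ → ℝ} {a b : ℝ}

theorem integral_mul_le_sqrt_mul_sqrt {f g : ℝ → ℝ} (hab : a ≤ b)
    (hf : Continuous f) (hg : Continuous g) :
    ∫ x in a..b, f x * g x ≤ √(∫ x in a..b, f x ^ 2) * √(∫ x in a..b, g x ^ 2) := by
  have memLp : ∀ {h : ℝ → ℝ}, Continuous h → MemLp h 2 (volume.restrict (Ioc a b)) :=
    fun hh => (memLp_two_iff_integrable_sq hh.aestronglyMeasurable).2
      ((hh.pow 2).integrableOn_Icc.mono_set Ioc_subset_Icc_self)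
  simp only [integral_of_le hab]
  exact _root_.integral_mul_le_sqrt_mul_sqrt (memLp hf) (memLp hg)

theorem integral_sq_primitive_le (hab : a ≤ b) (hv : Continuous v) :
    ∫ x in a..b, (∫ t in a..x, v t) ^ 2 ≤ (b - a) ^ 2 * ∫ x in a..b, v x ^ 2 := by
  have hsq : 0 ≤ ∫ x in a..b, v x ^ 2 := integral_nonneg hab fun x _ => sq_nonneg _
  have hpoint :
      ∀ x ∈ Icc a b, (∫ t in a..x, v t) ^ 2 ≤ (b - a) * ∫ x in a..b, v x ^ 2 := by
    intro x hx
    have habs : |∫ t in a..x, v t| ≤ √(b - a) * √(∫ x in a..b, v x ^ 2) :=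
      calc |∫ t in a..x, v t| ≤ ∫ t in a..x, |v t| := abs_integral_le_integral_abs hx.1
        _ ≤ ∫ t in a..b, |v t| := integral_mono_interval le_rfl hx.1 hx.2
            (Filter.Eventually.of_forall fun t => abs_nonneg (v t))
            (hv.abs.intervalIntegrable _ _)
        _ = ∫ t in a..b, 1 * |v t| := by simp only [one_mul]
        _ ≤ √(∫ t in a..b, (1 : ℝ) ^ 2) * √(∫ t in a..b, |v t| ^ 2) :=
            integral_mul_le_sqrt_mul_sqrt hab continuous_const hv.abs
        _ = √(b - a) * √(∫ x in a..b, v x ^ 2) := by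
            simp only [one_pow, integral_const, smul_eq_mul, mul_one, sq_abs]
    calc (∫ t in a..x, v t) ^ 2 = |∫ t in a..x, v t| ^ 2 := (sq_abs _).symm
      _ ≤ (√(b - a) * √(∫ x in a..b, v x ^ 2)) ^ 2 := by gcongr
      _ = (b - a) * ∫ x in a..b, v x ^ 2 := by
        rw [mul_pow, Real.sq_sqrt (sub_nonneg.2 hab), Real.sq_sqrt hsq]
  calc ∫ x in a..b, (∫ t in a..x, v t) ^ 2
      ≤ ∫ _ in a..b, (b - a) * ∫ x in a..b, v x ^ 2 :=
        integral_mono_on hab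
          (((hv.contDiff_one_primitive a).continuous.pow 2).intervalIntegrable _ _)
          intervalIntegrable_const hpoint
    _ = (b - a) ^ 2 * ∫ x in a..b, v x ^ 2 := by simp only [integral_const, smul_eq_mul]; ring

theorem integral_sq_primitive_add_sq_le (hab : a ≤ b) (hv : Continuous v) :
    ∫ x in a..b, ((∫ t in a..x, v t) ^ 2 + v x ^ 2) ≤
      ((b - a) ^ 2 + 1) * ∫ x in a..b, v x ^ 2 := by
  rw [integral_add (f := fun x => (∫ t in a..x, v t) ^ 2) (g := fun x => v x ^ 2)
    (((hv.contDiff_one_primitive a).continuous.pow 2).intervalIntegrable _ _)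
    ((hv.pow 2).intervalIntegrable _ _)]
  linarith [integral_sq_primitive_le hab hv]

theorem integral_deriv_mul_primitive (hv : ContDiff ℝ 1 v) (ha : v a = 0) (hb : v b = 0) :
    ∫ x in a..b, deriv v x * ∫ t in a..x, v t = -∫ x in a..b, v x ^ 2 := by
  simp only [mul_comm (deriv v _)]
  rw [integral_mul_deriv_eq_deriv_mul
    (fun x _ => (hv.continuous.integral_hasStrictDerivAt a x).hasDerivAt)
    (fun x _ => (hv.differentiable one_ne_zero x).hasDerivAt)
    (hv.continuous.intervalIntegrable _ _) ((hv.continuous_deriv le_rfl).intervalIntegrable _ _)]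
  simp [ha, hb, sq]

theorem integral_sq_le_integral_sq_add_sq_deriv (hab : a ≤ b) (hv : ContDiff ℝ 1 v) :
    ∫ x in a..b, v x ^ 2 ≤ ∫ x in a..b, (v x ^ 2 + deriv v x ^ 2) :=
  integral_mono_on hab ((hv.continuous.pow 2).intervalIntegrable _ _)
    (((hv.continuous.pow 2).add ((hv.continuous_deriv le_rfl).pow 2)).intervalIntegrable _ _)
    fun _ _ => le_add_of_nonneg_right (sq_nonneg _)

end intervalIntegral

section DualNorm

open intervalIntegral

variable {φ w : ℝ → ℝ}

theorem integral_mul_le_dualH1norm (hφ : Continuous φ) (hw : ContDiff ℝ 1 w)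
    (hw1 : ∫ x in (0:ℝ)..1, (w x ^ 2 + deriv w x ^ 2) ≤ 1) :
    ∫ x in (0:ℝ)..1, φ x * w x ≤ dualH1norm φ := by
  refine le_csSup ⟨√(∫ x in (0:ℝ)..1, φ x ^ 2), ?_⟩ ⟨w, hw, hw1, rfl⟩
  rintro _ ⟨u, hu, hu1, rfl⟩
  calc ∫ x in (0:ℝ)..1, φ x * u x
      ≤ √(∫ x in (0:ℝ)..1, φ x ^ 2) * √(∫ x in (0:ℝ)..1, u x ^ 2) :=
        integral_mul_le_sqrt_mul_sqrt zero_le_one hφ hu.continuous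
    _ ≤ √(∫ x in (0:ℝ)..1, φ x ^ 2) * 1 := by
        gcongr
        exact Real.sqrt_le_one.2
          ((integral_sq_le_integral_sq_add_sq_deriv zero_le_one hu).trans hu1)
    _ = √(∫ x in (0:ℝ)..1, φ x ^ 2) := mul_one _

theorem dualH1norm_nonneg (hφ : Continuous φ) : 0 ≤ dualH1norm φ := by
  simpa using integral_mul_le_dualH1norm (w := 0) hφ contDiff_const (by simp)

theorem integral_mul_le_sqrt_mul_dualH1norm (hφ : Continuous φ) (hw : ContDiff ℝ 1 w) :
    ∫ x in (0:ℝ)..1, φ x * w x ≤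
      √(∫ x in (0:ℝ)..1, (w x ^ 2 + deriv w x ^ 2)) * dualH1norm φ := by
  set E := ∫ x in (0:ℝ)..1, (w x ^ 2 + deriv w x ^ 2)
  have hE : 0 ≤ E := integral_nonneg zero_le_one fun x _ => by positivity
  rcases (Real.sqrt_nonneg E).eq_or_lt with hs | hs
  · have hw0 : ∫ x in (0:ℝ)..1, w x ^ 2 ≤ 0 :=
      (integral_sq_le_integral_sq_add_sq_deriv zero_le_one hw).trans
        (Real.sqrt_eq_zero'.1 hs.symm)
    calc ∫ x in (0:ℝ)..1, φ x * w x
        ≤ √(∫ x in (0:ℝ)..1, φ x ^ 2) * √(∫ x in (0:ℝ)..1, w x ^ 2) :=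
          integral_mul_le_sqrt_mul_sqrt zero_le_one hφ hw.continuous
      _ = √E * dualH1norm φ := by rw [Real.sqrt_eq_zero'.2 hw0, ← hs, mul_zero, zero_mul]
  · set s := √E
    have hscaled : ∫ x in (0:ℝ)..1, ((w x / s) ^ 2 + deriv (fun y => w y / s) x ^ 2) = 1 := by
      simp only [deriv_div_const, div_pow, ← add_div, intervalIntegral.integral_div]
      exact (Real.sq_sqrt hE).symm ▸ div_self (Real.sqrt_pos.1 hs).ne'
    have := integral_mul_le_dualH1norm hφ (hw.div_const s) hscaled.le
    simp only [mul_div_assoc', intervalIntegral.integral_div] at this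
    rwa [div_le_iff₀ hs, mul_comm] at this

end DualNorm

/-- there is `C > 0` such that every `C¹` function vanishing at `0` and `1`
satisfies `‖v‖_{L²} ≤ C ‖v'‖_{(H¹)'}`. -/
theorem L2_le_dualH1_of_deriv :
    ∃ C > (0:ℝ), ∀ v : ℝ → ℝ, ContDiff ℝ 1 v → v 0 = 0 → v 1 = 0 →
      L2norm v ≤ C * dualH1norm (deriv v) := by
  refine ⟨√2, by positivity, fun v hv h0 h1 => ?_⟩
  have hvc : Continuous v := hv.continuous
  have hv'c : Continuous (deriv v) := hv.continuous_deriv le_rfl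
  set N := L2norm v
  have hN0 : 0 ≤ N := Real.sqrt_nonneg _
  have hN : ∫ x in (0:ℝ)..1, v x ^ 2 = N ^ 2 :=
    (Real.sq_sqrt (intervalIntegral.integral_nonneg zero_le_one fun x _ => sq_nonneg (v x))).symm
  set w : ℝ → ℝ := fun x => -∫ t in (0:ℝ)..x, v t
  have hwC1 : ContDiff ℝ 1 w := (hvc.contDiff_one_primitive 0).neg
  have hw' : deriv w = fun x => -v x :=
    funext fun x => by simp [w, Continuous.deriv_integral v hvc]
  have hpair : ∫ x in (0:ℝ)..1, deriv v x * w x = N ^ 2 := by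
    simp only [w, mul_neg, intervalIntegral.integral_neg,
      intervalIntegral.integral_deriv_mul_primitive hv h0 h1, neg_neg, hN]
  have henergy : ∫ x in (0:ℝ)..1, (w x ^ 2 + deriv w x ^ 2) ≤ 2 * N ^ 2 := by
    simpa [w, hw', hN, one_add_one_eq_two] using
      intervalIntegral.integral_sq_primitive_add_sq_le zero_le_one hvc
  have hbound : N ^ 2 ≤ √2 * N * dualH1norm (deriv v) :=
    calc N ^ 2 = ∫ x in (0:ℝ)..1, deriv v x * w x := hpair.symm
      _ ≤ √(∫ x in (0:ℝ)..1, (w x ^ 2 + deriv w x ^ 2)) * dualH1norm (deriv v) :=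
        integral_mul_le_sqrt_mul_dualH1norm hv'c hwC1
      _ ≤ √(2 * N ^ 2) * dualH1norm (deriv v) := by
        gcongr
        exact dualH1norm_nonneg hv'c
      _ = √2 * N * dualH1norm (deriv v) := by rw [Real.sqrt_mul zero_le_two, Real.sqrt_sq hN0]
  nlinarith [mul_nonneg (Real.sqrt_nonneg 2) (dualH1norm_nonneg hv'c)]

end
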